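/- arXiv:2102.01725 — 3 statements merged into one kernel-verified Lean document; each statement's English description precedes it below -/
import Mathlib

section
/- In H², the squared optimal distance from 1 to (1−z)·𝒫_n equals 1/(n+2); that is, if q_n is the n-th optimal polynomial approximant of 1/(1−z), then ‖q_n(z)(1−z) − 1‖² = 1/(n+2). -/
open scoped BigOperators
open Polynomial Filter

noncomputable section

/-- Coefficient sequence of the product p·f, where f is an analytic function on the disk
given by its Taylor coefficient sequence. -/
def polyMulSeq (p : Polynomial ℂ) (f : ℕ → ℂ) : ℕ → ℂ :=
  fun n => ∑ j ∈ Finset.range (n + 1), p.coeff j * f (n - j)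

/-- The constant function 1 as a Taylor coefficient sequence. -/
def oneSeq : ℕ → ℂ := fun n => if n = 0 then 1 else 0

/-- Membership in the weighted Hardy space H²_ω. -/
def MemHw (ω : ℕ → ℝ) (f : ℕ → ℂ) : Prop :=
  Summable (fun k => ‖f k‖ ^ 2 * ω k)

/-- Squared weighted norm ‖f‖²_ω. -/
def wNormSq (ω : ℕ → ℝ) (f : ℕ → ℂ) : ℝ := ∑' k, ‖f k‖ ^ 2 * ω k

/-- Weighted inner product ⟨f,g⟩_ω. -/
def wInner (ω : ℕ → ℝ) (f g : ℕ → ℂ) : ℂ :=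
  ∑' k, f k * (starRingEnd ℂ) (g k) * (ω k : ℂ)

/-- `q` is the n-th optimal polynomial approximant of 1/f in H²_ω. -/
def IsOPA (ω : ℕ → ℝ) (f : ℕ → ℂ) (n : ℕ) (q : Polynomial ℂ) : Prop :=
  q.natDegree ≤ n ∧
  ∀ p : Polynomial ℂ, p.natDegree ≤ n →
    wNormSq ω (polyMulSeq q f - oneSeq) ≤ wNormSq ω (polyMulSeq p f - oneSeq)


/-! The error `q·(1 - z) - 1` of any `q ∈ 𝒫_n` is a polynomial of degree at most `n + 1` taking
the value `-1` at `z = 1`, i.e. its `n + 2` coefficients sum to `-1`; by Cauchy–Schwarz its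
squared norm is at least `1/(n+2)`. Equality holds when all those coefficients equal `-1/(n+2)`,
which is the error of `q = (1/(n+2)) ∑_{k<n+2} (1 + z + ⋯ + z^(k-1))`, since
`(1 - z)(1 + z + ⋯ + z^(k-1)) = 1 - z^k`. -/

lemma polyMulSeq_coeff (p f : ℂ[X]) :
    polyMulSeq p (fun k => f.coeff k) = fun k => (p * f).coeff k := by
  funext k
  rw [coeff_mul, Finset.Nat.sum_antidiagonal_eq_sum_range_succ_mk]
  rfl

lemma polyMulSeq_sub_oneSeq (p f : ℂ[X]) :
    polyMulSeq p (fun k => f.coeff k) - oneSeq = fun k => (p * f - 1).coeff k := by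
  funext k
  simp only [polyMulSeq_coeff, Pi.sub_apply, coeff_sub, coeff_one, oneSeq]

lemma coeff_one_sub_X :
    (fun k => (1 - X : ℂ[X]).coeff k) =
      fun k => if k = 0 then 1 else if k = 1 then -1 else 0 := by
  funext k
  rcases k with _ | _ | k <;> simp [coeff_one, coeff_X]

lemma wNormSq_coeff_eq_sum (ω : ℕ → ℝ) {e : ℂ[X]} {N : ℕ} (he : e.natDegree < N) :
    wNormSq ω (fun k => e.coeff k) = ∑ k ∈ Finset.range N, ‖e.coeff k‖ ^ 2 * ω k := by
  refine tsum_eq_sum fun k hk => ?_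
  simp [coeff_eq_zero_of_natDegree_lt (he.trans_le (by simpa using hk))]

lemma norm_eval_one_sq_le {e : ℂ[X]} {N : ℕ} (he : e.natDegree < N) :
    ‖e.eval 1‖ ^ 2 ≤ N * wNormSq (fun _ => 1) (fun k => e.coeff k) := by
  have hsum : e.eval 1 = ∑ k ∈ Finset.range N, e.coeff k := by
    simp [eval_eq_sum_range' he]
  calc ‖e.eval 1‖ ^ 2 ≤ (∑ k ∈ Finset.range N, ‖e.coeff k‖) ^ 2 := by
        rw [hsum]; gcongr; exact norm_sum_le _ _
    _ ≤ N * ∑ k ∈ Finset.range N, ‖e.coeff k‖ ^ 2 := by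
        simpa using sq_sum_le_card_mul_sum_sq (s := Finset.range N) (f := fun k => ‖e.coeff k‖)
    _ = N * wNormSq (fun _ => 1) (fun k => e.coeff k) := by
        simp [wNormSq_coeff_eq_sum _ he]

lemma natDegree_mul_one_sub_X_sub_one_lt {R : Type*} [Ring R] {p : R[X]} {n : ℕ} (hp : p.natDegree ≤ n) :
    (p * (1 - X) - 1).natDegree < n + 2 := by
  have h1X : (1 - X : R[X]).natDegree ≤ 1 :=
    (natDegree_sub_le _ _).trans (by simp [natDegree_X_le])
  have hmul := (natDegree_mul_le (p := p) (q := 1 - X)).trans (add_le_add hp h1X)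
  exact (natDegree_sub_le _ _).trans_lt (by simp; omega)

lemma one_div_le_wNormSq_error {p : ℂ[X]} {n : ℕ} (hp : p.natDegree ≤ n) :
    1 / ((n : ℝ) + 2) ≤ wNormSq (fun _ => 1) (fun k => (p * (1 - X) - 1).coeff k) := by
  have hCS := norm_eval_one_sq_le (natDegree_mul_one_sub_X_sub_one_lt hp)
  simp only [eval_sub, eval_mul, eval_one, eval_X, sub_self, mul_zero, zero_sub, norm_neg,
    norm_one, one_pow] at hCS
  rw [div_le_iff₀ (by positivity)]
  push_cast at hCS
  linarith

def optimalApproximant (n : ℕ) : ℂ[X] :=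
  C (1 / ((n : ℂ) + 2)) * ∑ k ∈ Finset.range (n + 2), ∑ j ∈ Finset.range k, X ^ j

lemma natDegree_optimalApproximant_le (n : ℕ) : (optimalApproximant n).natDegree ≤ n := by
  refine (natDegree_C_mul_le _ _).trans (natDegree_sum_le_of_forall_le _ _ fun k hk => ?_)
  refine natDegree_sum_le_of_forall_le _ _ fun j hj => ?_
  simp only [Finset.mem_range] at hk hj
  exact (natDegree_X_pow_le j).trans (by omega)

lemma optimalApproximant_mul_one_sub_X_sub_one (n : ℕ) :
    optimalApproximant n * (1 - X) - 1 =
      -C (1 / ((n : ℂ) + 2)) * ∑ k ∈ Finset.range (n + 2), X ^ k := by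
  have hscale : C (1 / ((n : ℂ) + 2)) * ((n + 2 : ℕ) : ℂ[X]) = 1 := by
    rw [← C_eq_natCast, ← C_mul, ← C_1]
    congr 1
    push_cast
    exact one_div_mul_cancel (by exact_mod_cast (n + 1).succ_ne_zero)
  have htelescope : (∑ k ∈ Finset.range (n + 2), ∑ j ∈ Finset.range k, (X : ℂ[X]) ^ j) * (1 - X) =
      ((n + 2 : ℕ) : ℂ[X]) - ∑ k ∈ Finset.range (n + 2), X ^ k := by
    rw [Finset.sum_mul]
    simp only [geom_sum_mul_neg, Finset.sum_sub_distrib, Finset.sum_const, Finset.card_range,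
      nsmul_one]
  rw [optimalApproximant, mul_assoc, htelescope]
  linear_combination hscale

lemma wNormSq_error_optimalApproximant (n : ℕ) :
    wNormSq (fun _ => 1) (fun k => (optimalApproximant n * (1 - X) - 1).coeff k) =
      1 / ((n : ℝ) + 2) := by
  have hdeg : (-C (1 / ((n : ℂ) + 2)) * ∑ k ∈ Finset.range (n + 2), X ^ k).natDegree < n + 2 := by
    rw [neg_mul, natDegree_neg]
    refine (natDegree_C_mul_le _ _).trans_lt (Nat.lt_succ_of_le ?_)
    exact natDegree_sum_le_of_forall_le _ _ fun k hk =>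
      (natDegree_X_pow_le k).trans (Nat.lt_succ_iff.mp (Finset.mem_range.mp hk))
  have hnorm : ‖(n : ℂ) + 2‖ = n + 2 := by exact_mod_cast Complex.norm_natCast (n + 2)
  have hterm : ∀ k ∈ Finset.range (n + 2),
      ‖(-C (1 / ((n : ℂ) + 2)) * ∑ j ∈ Finset.range (n + 2), X ^ j).coeff k‖ ^ 2 * 1 =
        1 / ((n : ℝ) + 2) ^ 2 := fun k hk => by
    simp [coeff_X_pow, Finset.mem_range.mp hk, hnorm]
  rw [optimalApproximant_mul_one_sub_X_sub_one, wNormSq_coeff_eq_sum _ hdeg,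
    Finset.sum_congr rfl hterm, Finset.sum_const, Finset.card_range, nsmul_eq_mul]
  push_cast
  field_simp

/-- In H², the squared optimal distance from 1 to (1-z)·𝒫_n equals 1/(n+2). -/
theorem stmt_3 (n : ℕ) (q : Polynomial ℂ)
    (hq : IsOPA (fun _ => 1) (fun k => if k = 0 then 1 else if k = 1 then -1 else 0) n q) :
    wNormSq (fun _ => 1)
        (polyMulSeq q (fun k => if k = 0 then 1 else if k = 1 then -1 else 0) - oneSeq)
      = 1 / ((n : ℝ) + 2) := by
  obtain ⟨hdeg, hopt⟩ := hq
  have hbetter := hopt (optimalApproximant n) (natDegree_optimalApproximant_le n)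
  rw [← coeff_one_sub_X, polyMulSeq_sub_oneSeq, polyMulSeq_sub_oneSeq,
    wNormSq_error_optimalApproximant] at hbetter
  rw [← coeff_one_sub_X, polyMulSeq_sub_oneSeq]
  exact le_antisymm hbetter (one_div_le_wNormSq_error hdeg)
end
end

section
/- With notation as in the orthonormal basis formula, q_n(z) f(z) = K_n(z,0), where K_n(·,0) = Σ_{k=0}^n conj(f(0) φ_k(0)) φ_k f is the reproducing kernel at 0 for the subspace f·𝒫_n: for every polynomial q of degree ≤ n, ⟨qf, q_n f⟩_ω = q(0) f(0). -/
/-!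
Multiplication by `√ω` embeds `H²_ω` isometrically into `ℓ²`, sending the functions `φ_k f` to an
orthonormal family `e_k` and the constant `1` to a vector `v`. Writing `q_n = ∑ c_k φ_k`,
optimality of `q_n` says that `∑ c_k e_k` is a best approximation of `v` in the span of the `e_k`,
and Pythagoras forces the Fourier coefficients `c_k = ⟪e_k, v⟫ = conj (φ_k(0) f(0))` (as `ω 0 = 1`).
This is the kernel formula; the reproducing property follows by expanding `p = ∑ a_k φ_k` and using
orthonormality once more.
-/

open scoped BigOperators
open Polynomial Filter

noncomputable section

open scoped InnerProductSpace ComplexConjugate lp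

theorem polyMulSeq_sum_smul {ι : Type*} (s : Finset ι) (a : ι → ℂ) (P : ι → ℂ[X])
    (f : ℕ → ℂ) :
    polyMulSeq (∑ i ∈ s, a i • P i) f = ∑ i ∈ s, a i • polyMulSeq (P i) f := by
  ext m
  simp only [polyMulSeq, finsetSum_coeff, coeff_smul, smul_eq_mul, Finset.sum_apply,
    Pi.smul_apply, Finset.sum_mul, Finset.mul_sum, mul_assoc]
  exact Finset.sum_comm

theorem polyMulSeq_apply_zero (p : ℂ[X]) (f : ℕ → ℂ) : polyMulSeq p f 0 = p.eval 0 * f 0 := by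
  simp [polyMulSeq, coeff_zero_eq_eval_zero]

theorem Polynomial.exists_sum_smul_eq_of_degree_eq {K : Type*} [Field K] {n : ℕ}
    {φ : ℕ → K[X]} (hφ : ∀ k ≤ n, (φ k).degree = k) {p : K[X]} (hp : p.natDegree ≤ n) :
    ∃ a : Fin (n + 1) → K, ∑ k, a k • φ k = p := by
  classical
  let S : Sequence K := ⟨fun k => if k ≤ n then φ k else X ^ k, fun k => by
    split_ifs with hk
    · exact hφ k hk
    · exact degree_X_pow k⟩
  have hspan := S.span_degreeLT (m := n + 1) fun k _ =>
    isUnit_iff_ne_zero.mpr (leadingCoeff_ne_zero.mpr (S.ne_zero k))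
  have hmem : p ∈ Submodule.span K (S '' ↑(Finset.range (n + 1))) := by
    rw [Finset.coe_range, hspan, mem_degreeLT]
    exact (degree_le_of_natDegree_le hp).trans_lt (WithBot.coe_lt_coe.mpr n.lt_succ_self)
  obtain ⟨a, ha⟩ := (Submodule.mem_span_image_finset_iff_exists_fun' K).mp hmem
  refine ⟨fun k => a k, ?_⟩
  rw [← ha, Fin.sum_univ_eq_sum_range (fun k => a k • φ k)]
  refine Finset.sum_congr rfl fun k hk => ?_
  simp [S, Nat.le_of_lt_succ (Finset.mem_range.mp hk)]

theorem Orthonormal.eq_inner_of_norm_sum_smul_sub_le {𝕜 E ι : Type*} [RCLike 𝕜]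
    [NormedAddCommGroup E] [InnerProductSpace 𝕜 E] [Fintype ι] {e : ι → E}
    (he : Orthonormal 𝕜 e) {v : E} {a : ι → 𝕜}
    (h : ‖∑ i, a i • e i - v‖ ≤ ‖∑ i, ⟪e i, v⟫_𝕜 • e i - v‖) : a = fun i => ⟪e i, v⟫_𝕜 := by
  set y := ∑ i, ⟪e i, v⟫_𝕜 • e i
  set x := ∑ i, a i • e i
  have hperp : ⟪x - y, y - v⟫_𝕜 = 0 := by
    have hx : x - y = ∑ i, (a i - ⟪e i, v⟫_𝕜) • e i := by
      simp only [x, y, sub_smul, Finset.sum_sub_distrib]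
    rw [hx, sum_inner]
    refine Finset.sum_eq_zero fun i _ => ?_
    rw [inner_smul_left, inner_sub_right, he.inner_right_fintype, sub_self, mul_zero]
  have hpyth := norm_add_sq_eq_norm_sq_add_norm_sq_of_inner_eq_zero _ _ hperp
  rw [sub_add_sub_cancel] at hpyth
  have hxy : x = y := by
    rw [← sub_eq_zero, ← norm_eq_zero]
    nlinarith [norm_nonneg (x - y), norm_nonneg (x - v), norm_nonneg (y - v)]
  funext i
  rw [← he.inner_right_fintype a i, ← he.inner_right_fintype (fun i => ⟪e i, v⟫_𝕜) i]
  exact congrArg (inner 𝕜 (e i)) hxy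

section Weighted

variable {ω : ℕ → ℝ}

def sqrtWeightMul (ω : ℕ → ℝ) : (ℕ → ℂ) →ₗ[ℂ] ℕ → ℂ :=
  LinearMap.pi fun k => ((√(ω k) : ℝ) : ℂ) • LinearMap.proj k

@[simp]
theorem sqrtWeightMul_apply (u : ℕ → ℂ) (k : ℕ) :
    sqrtWeightMul ω u k = ((√(ω k) : ℝ) : ℂ) * u k := rfl

theorem wInner_self (u : ℕ → ℂ) : wInner ω u u = wNormSq ω u := by
  rw [wInner, wNormSq, Complex.ofReal_tsum]
  congr 1 with k
  push_cast
  rw [Complex.mul_conj']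

theorem wInner_oneSeq_left (u : ℕ → ℂ) : wInner ω oneSeq u = conj (u 0) * ω 0 := by
  rw [wInner, tsum_eq_single 0 fun k hk => by simp [oneSeq, hk]]
  simp [oneSeq]

theorem memℓp_sqrtWeightMul_of_wInner_self_ne_zero (hω : ∀ k, 0 ≤ ω k) {u : ℕ → ℂ}
    (h : wInner ω u u ≠ 0) : Memℓp (sqrtWeightMul ω u) 2 := by
  have hsum : Summable fun k => ‖u k‖ ^ 2 * ω k := by
    -- a divergent `tsum` is the junk value `0`
    by_contra hns
    rw [wInner_self, wNormSq, tsum_eq_zero_of_not_summable hns, Complex.ofReal_zero] at h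
    exact h rfl
  refine (memℓp_gen_iff (by norm_num)).mpr (hsum.congr fun k => ?_)
  rw [sqrtWeightMul_apply, norm_mul, Complex.norm_real, Real.norm_of_nonneg (Real.sqrt_nonneg _),
    ENNReal.toReal_ofNat, Real.rpow_two, mul_pow, Real.sq_sqrt (hω k), mul_comm]

theorem wInner_eq_inner (hω : ∀ k, 0 ≤ ω k) {u w : ℕ → ℂ} {x y : ℓ²(ℕ, ℂ)}
    (hx : ⇑x = sqrtWeightMul ω u) (hy : ⇑y = sqrtWeightMul ω w) :
    wInner ω u w = ⟪y, x⟫_ℂ := by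
  rw [lp.inner_eq_tsum, wInner]
  congr 1 with k
  rw [hx, hy, RCLike.inner_apply, sqrtWeightMul_apply, sqrtWeightMul_apply, map_mul,
    Complex.conj_ofReal]
  calc u k * conj (w k) * ω k
      = u k * conj (w k) * ((√(ω k) : ℝ) * (√(ω k) : ℝ) : ℝ) := by
        rw [Real.mul_self_sqrt (hω k)]
    _ = _ := by push_cast; ring

theorem wNormSq_eq_norm_sq (hω : ∀ k, 0 ≤ ω k) {u : ℕ → ℂ} {x : ℓ²(ℕ, ℂ)}
    (hx : ⇑x = sqrtWeightMul ω u) : wNormSq ω u = ‖x‖ ^ 2 := by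
  have h := wInner_eq_inner hω hx hx
  rw [wInner_self, inner_self_eq_norm_sq_to_K] at h
  exact Complex.ofReal_injective (by push_cast; exact h)

theorem exists_orthonormal_lp_of_wInner_eq_ite (hω : ∀ k, 0 ≤ ω k) {n : ℕ} {u : ℕ → ℕ → ℂ}
    (hu : ∀ j ≤ n, ∀ k ≤ n, wInner ω (u j) (u k) = if j = k then 1 else 0) :
    ∃ e : Fin (n + 1) → ℓ²(ℕ, ℂ),
      Orthonormal ℂ e ∧ ∀ k, ⇑(e k) = sqrtWeightMul ω (u k) := by
  have hmem (k : Fin (n + 1)) : Memℓp (sqrtWeightMul ω (u k)) 2 :=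
    memℓp_sqrtWeightMul_of_wInner_self_ne_zero hω (by simp [hu k k.is_le k k.is_le])
  refine ⟨fun k => ⟨_, hmem k⟩, orthonormal_iff_ite.mpr fun j k => ?_, fun k => rfl⟩
  rw [← wInner_eq_inner hω rfl rfl, hu k k.is_le j j.is_le]
  simp only [Fin.val_inj, eq_comm]

theorem coe_sum_smul_eq_sqrtWeightMul_polyMulSeq {ι : Type*} [Fintype ι] {f : ℕ → ℂ}
    {φ : ι → ℂ[X]} {e : ι → ℓ²(ℕ, ℂ)}
    (hrep : ∀ i, ⇑(e i) = sqrtWeightMul ω (polyMulSeq (φ i) f)) (a : ι → ℂ) :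
    ⇑(∑ i, a i • e i) = sqrtWeightMul ω (polyMulSeq (∑ i, a i • φ i) f) := by
  rw [lp.coeFn_sum, polyMulSeq_sum_smul, map_sum]
  simp only [lp.coeFn_smul, hrep, map_smul]

theorem IsOPA.coeff_eq_inner (hω : ∀ k, 0 ≤ ω k) {f : ℕ → ℂ} {n : ℕ} {ι : Type*} [Fintype ι]
    {φ : ι → ℂ[X]} (hφ : ∀ i, (φ i).natDegree ≤ n) {e : ι → ℓ²(ℕ, ℂ)} (he : Orthonormal ℂ e)
    (hrep : ∀ i, ⇑(e i) = sqrtWeightMul ω (polyMulSeq (φ i) f)) {v : ℓ²(ℕ, ℂ)}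
    (hv : ⇑v = sqrtWeightMul ω oneSeq) {c : ι → ℂ} (hq : IsOPA ω f n (∑ i, c i • φ i)) :
    c = fun i => ⟪e i, v⟫_ℂ := by
  have hnorm (a : ι → ℂ) :
      wNormSq ω (polyMulSeq (∑ i, a i • φ i) f - oneSeq) = ‖∑ i, a i • e i - v‖ ^ 2 :=
    wNormSq_eq_norm_sq hω (by
      rw [lp.coeFn_sub, coe_sum_smul_eq_sqrtWeightMul_polyMulSeq hrep, hv, map_sub])
  have hmin := hq.2 (∑ i, ⟪e i, v⟫_ℂ • φ i)
    (natDegree_sum_le_of_forall_le _ _ fun i _ => (natDegree_smul_le _ _).trans (hφ i))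
  rw [hnorm, hnorm, pow_le_pow_iff_left₀ (norm_nonneg _) (norm_nonneg _) two_ne_zero] at hmin
  exact he.eq_inner_of_norm_sum_smul_sub_le hmin

end Weighted

theorem stmt_7_general (ω : ℕ → ℝ) (hω0 : ω 0 = 1) (hωpos : ∀ k, 0 < ω k)
    (f : ℕ → ℂ)
    (n : ℕ) (φ : ℕ → Polynomial ℂ)
    (hdeg : ∀ k ≤ n, (φ k).natDegree = k)
    (horth : ∀ j ≤ n, ∀ k ≤ n,
      wInner ω (polyMulSeq (φ j) f) (polyMulSeq (φ k) f) = if j = k then 1 else 0)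
    (q : Polynomial ℂ) (hq : IsOPA ω f n q) :
    (polyMulSeq q f = fun m =>
      ∑ k ∈ Finset.range (n + 1),
        (starRingEnd ℂ) (f 0 * (φ k).eval 0) * polyMulSeq (φ k) f m) ∧
    ∀ p : Polynomial ℂ, p.natDegree ≤ n →
      wInner ω (polyMulSeq p f) (polyMulSeq q f) = p.eval 0 * f 0 := by
  have hω (k : ℕ) : 0 ≤ ω k := (hωpos k).le
  have hφ (k : ℕ) (hk : k ≤ n) : (φ k).degree = k := by
    have hne : φ k ≠ 0 := fun h => by simpa [h, polyMulSeq, wInner] using horth k hk k hk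
    rw [degree_eq_natDegree hne, hdeg k hk]
  obtain ⟨e, he, hrep⟩ := exists_orthonormal_lp_of_wInner_eq_ite hω horth
  have hone : wInner ω oneSeq oneSeq ≠ 0 := by simp [wInner_oneSeq_left, oneSeq, hω0]
  set v : ℓ²(ℕ, ℂ) := ⟨_, memℓp_sqrtWeightMul_of_wInner_self_ne_zero hω hone⟩
  have hcoeff (k : Fin (n + 1)) : ⟪e k, v⟫_ℂ = conj (f 0 * (φ k).eval 0) := by
    rw [← wInner_eq_inner hω rfl (hrep k), wInner_oneSeq_left, polyMulSeq_apply_zero, hω0,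
      Complex.ofReal_one, mul_one, mul_comm]
  obtain ⟨c, rfl⟩ := exists_sum_smul_eq_of_degree_eq hφ hq.1
  have hc := hq.coeff_eq_inner hω (φ := fun k : Fin (n + 1) => φ k)
    (fun k => (hdeg k k.is_le).trans_le k.is_le) he hrep (v := v) rfl
  constructor
  · ext m
    rw [polyMulSeq_sum_smul, ← Fin.sum_univ_eq_sum_range
      (fun k => conj (f 0 * (φ k).eval 0) * polyMulSeq (φ k) f m)]
    simp [hc, hcoeff]
  · intro p hp
    obtain ⟨a, rfl⟩ := exists_sum_smul_eq_of_degree_eq hφ hp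
    rw [wInner_eq_inner hω (coe_sum_smul_eq_sqrtWeightMul_polyMulSeq hrep a)
      (coe_sum_smul_eq_sqrtWeightMul_polyMulSeq hrep c), he.inner_sum, eval_finsetSum,
      Finset.sum_mul]
    refine Finset.sum_congr rfl fun k _ => ?_
    simp only [hc, hcoeff, Complex.conj_conj, eval_smul, smul_eq_mul]
    ring

/-- q_n f = K_n(·,0), the reproducing kernel at 0 for f·𝒫_n:
q_n f = ∑_k conj(f(0) φ_k(0)) φ_k f and ⟨qf, q_n f⟩_ω = q(0) f(0) for all q ∈ 𝒫_n. -/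
theorem stmt_7 (ω : ℕ → ℝ) (hω0 : ω 0 = 1) (hωpos : ∀ k, 0 < ω k)
    (f : ℕ → ℂ) (hf : MemHw ω f) (hf0 : f ≠ 0)
    (n : ℕ) (φ : ℕ → Polynomial ℂ)
    (hdeg : ∀ k ≤ n, (φ k).natDegree = k)
    (horth : ∀ j ≤ n, ∀ k ≤ n,
      wInner ω (polyMulSeq (φ j) f) (polyMulSeq (φ k) f) = if j = k then 1 else 0)
    (q : Polynomial ℂ) (hq : IsOPA ω f n q) :
    (polyMulSeq q f = fun m =>
      ∑ k ∈ Finset.range (n + 1),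
        (starRingEnd ℂ) (f 0 * (φ k).eval 0) * polyMulSeq (φ k) f m) ∧
    ∀ p : Polynomial ℂ, p.natDegree ≤ n →
      wInner ω (polyMulSeq p f) (polyMulSeq q f) = p.eval 0 * f 0 :=
  stmt_7_general ω hω0 hωpos f n φ hdeg horth q hq
end
end

section
/- Let f ∈ H² with f(0) ≠ 0. Then for every n, the n-th optimal polynomial approximant q_n of 1/f has no zeros in the closed unit disk. -/
open scoped BigOperators
open Polynomial Filter

noncomputable section

/-!
Send a polynomial `p` to `p f ∈ ℓ²`. Optimality of `q` says that `q f - 1` is orthogonal to `p f`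
for every `p` of degree `≤ n`; taking `p = 1` and using `f 0 ≠ 0` gives `q f ≠ 0`.
If `q (α) = 0`, write `q = (X - α) r`. Then `X r` still has degree `≤ n` and `(X r) f` has no
constant term, so `(X r) f ⊥ q f = (X r) f - α (r f)`. As multiplication by `X` is an isometry,
Pythagoras gives `|α|² ‖r f‖² = ‖r f‖² + ‖q f‖²`, and `|α| ≤ 1` forces `q f = 0`.
-/
open scoped lp InnerProductSpace

theorem inner_eq_zero_of_isMinOn_norm_sub {𝕜 E : Type*} [RCLike 𝕜] [NormedAddCommGroup E]
    [InnerProductSpace 𝕜 E] {K : Submodule 𝕜 E} {u v : E} (hv : v ∈ K)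
    (hmin : IsMinOn (fun w => ‖w - u‖) K v) {w : E} (hw : w ∈ K) : ⟪w, v - u⟫_𝕜 = 0 := by
  have hinf : ‖u - v‖ = ⨅ w : K, ‖u - w‖ := by
    refine le_antisymm (le_ciInf fun w => ?_) (ciInf_le ⟨0, ?_⟩ (⟨v, hv⟩ : K))
    · simpa only [norm_sub_rev u] using isMinOn_iff.1 hmin w w.2
    · rintro _ ⟨w, rfl⟩; exact norm_nonneg _
  rw [inner_eq_zero_symm, ← neg_sub, inner_neg_left, neg_eq_zero]
  exact (K.norm_eq_iInf_iff_inner_eq_zero hv).1 hinf w hw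

theorem eq_smul_of_norm_eq_of_inner_sub_smul_eq_zero {𝕜 E : Type*} [RCLike 𝕜]
    [NormedAddCommGroup E] [InnerProductSpace 𝕜 E] {u v : E} {a : 𝕜} (ha : ‖a‖ ≤ 1)
    (hvu : ‖v‖ = ‖u‖) (h : ⟪v, v - a • u⟫_𝕜 = 0) : v = a • u := by
  have hpyth := norm_add_sq_eq_norm_sq_add_norm_sq_of_inner_eq_zero (𝕜 := 𝕜) v (-(v - a • u))
    (by rw [inner_neg_right, h, neg_zero])
  rw [← sub_eq_add_neg, sub_sub_cancel, norm_neg, norm_smul, hvu] at hpyth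
  have hau : ‖a‖ * ‖u‖ ≤ ‖u‖ := mul_le_of_le_one_left (norm_nonneg u) ha
  have hw : ‖v - a • u‖ * ‖v - a • u‖ = 0 :=
    le_antisymm (by nlinarith [mul_self_le_mul_self (by positivity) hau]) (mul_self_nonneg _)
  exact sub_eq_zero.1 (norm_eq_zero.1 (mul_self_eq_zero.1 hw))

theorem Memℓp.of_comp_succ {E : ℕ → Type*} [∀ i, NormedAddCommGroup (E i)] {p : ENNReal}
    (hp : 0 < p.toReal) {g : ∀ i, E i} (h : Memℓp (fun k => g (k + 1)) p) : Memℓp g p := by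
  rw [memℓp_gen_iff hp] at h ⊢
  exact (summable_nat_add_iff 1).1 h

theorem memHw_one_iff {g : ℕ → ℂ} : MemHw (fun _ => 1) g ↔ Memℓp g 2 := by
  rw [MemHw, memℓp_gen_iff (by norm_num)]
  simp

theorem wNormSq_one_eq (g : ℓ²(ℕ, ℂ)) : wNormSq (fun _ => 1) g = ‖g‖ ^ 2 := by
  rw [wNormSq, lp.norm_eq_tsum_rpow (by norm_num), ← Real.rpow_natCast,
    ← Real.rpow_mul (by positivity)]
  norm_num

theorem natDegree_X_mul_eq_natDegree_X_sub_C_mul {R : Type*} [Ring R] [Nontrivial R] (a : R)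
    (p : R[X]) : (X * p).natDegree = ((X - C a) * p).natDegree := by
  rcases eq_or_ne p 0 with rfl | hp
  · simp
  · rw [monic_X.natDegree_mul' hp, (monic_X_sub_C a).natDegree_mul' hp, natDegree_X,
      natDegree_X_sub_C]

section polyMulSeq

variable (f : ℕ → ℂ)

theorem polyMulSeq_add (p q : ℂ[X]) : polyMulSeq (p + q) f = polyMulSeq p f + polyMulSeq q f := by
  funext n
  simp [polyMulSeq, add_mul, Finset.sum_add_distrib]

theorem polyMulSeq_smul (c : ℂ) (p : ℂ[X]) : polyMulSeq (c • p) f = c • polyMulSeq p f := by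
  funext n
  simp [polyMulSeq, Finset.mul_sum, mul_assoc]

theorem polyMulSeq_C (c : ℂ) : polyMulSeq (C c) f = c • f := by
  funext n
  rw [polyMulSeq, Finset.sum_range_succ']
  simp [coeff_C]

theorem polyMulSeq_X_mul_zero (p : ℂ[X]) : polyMulSeq (X * p) f 0 = 0 := by
  simp [polyMulSeq]

theorem polyMulSeq_X_mul_succ (p : ℂ[X]) (n : ℕ) :
    polyMulSeq (X * p) f (n + 1) = polyMulSeq p f n := by
  rw [polyMulSeq, polyMulSeq, Finset.sum_range_succ']
  simp

variable {f}

theorem memℓp_polyMulSeq (hf : Memℓp f 2) (p : ℂ[X]) : Memℓp (polyMulSeq p f) 2 := by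
  induction p using Polynomial.induction_on with
  | C a => rw [polyMulSeq_C]; exact hf.const_smul a
  | add p q hp hq => rw [polyMulSeq_add]; exact hp.add hq
  | monomial n a ih =>
    rw [pow_succ', mul_left_comm]
    refine Memℓp.of_comp_succ (by norm_num) ?_
    simpa only [polyMulSeq_X_mul_succ] using ih

end polyMulSeq

section polyMulℓ2

variable {f : ℕ → ℂ} (hf : Memℓp f 2)

def polyMulℓ2 : ℂ[X] →ₗ[ℂ] ℓ²(ℕ, ℂ) where
  toFun p := ⟨polyMulSeq p f, memℓp_polyMulSeq hf p⟩
  map_add' p q := Subtype.ext (polyMulSeq_add f p q)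
  map_smul' c p := Subtype.ext (polyMulSeq_smul f c p)

theorem coe_polyMulℓ2 (p : ℂ[X]) : ⇑(polyMulℓ2 hf p) = polyMulSeq p f := rfl

theorem norm_polyMulℓ2_X_mul (p : ℂ[X]) : ‖polyMulℓ2 hf (X * p)‖ = ‖polyMulℓ2 hf p‖ := by
  rw [lp.norm_eq_tsum_rpow (by norm_num), lp.norm_eq_tsum_rpow (by norm_num),
    ((lp.memℓp _).summable (by norm_num)).tsum_eq_zero_add]
  simp [coe_polyMulℓ2, polyMulSeq_X_mul_zero, polyMulSeq_X_mul_succ]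

theorem inner_polyMulℓ2_X_mul_single_zero (p : ℂ[X]) :
    ⟪polyMulℓ2 hf (X * p), lp.single 2 0 1⟫_ℂ = 0 := by
  rw [lp.inner_single_right, coe_polyMulℓ2, polyMulSeq_X_mul_zero, inner_zero_left]

theorem wNormSq_polyMulSeq_sub_oneSeq (p : ℂ[X]) :
    wNormSq (fun _ => 1) (polyMulSeq p f - oneSeq) = ‖polyMulℓ2 hf p - lp.single 2 0 1‖ ^ 2 := by
  rw [← wNormSq_one_eq]
  congr
  ext k
  simp [oneSeq, Pi.single_apply]

variable {n : ℕ} {q : ℂ[X]}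

theorem IsOPA.inner_polyMulℓ2_eq_zero (hq : IsOPA (fun _ => 1) f n q) {p : ℂ[X]}
    (hp : p.natDegree ≤ n) : ⟪polyMulℓ2 hf p, polyMulℓ2 hf q - lp.single 2 0 1⟫_ℂ = 0 := by
  have hmem {p : ℂ[X]} (hp : p.natDegree ≤ n) :
      polyMulℓ2 hf p ∈ (degreeLE ℂ n).map (polyMulℓ2 hf) :=
    Submodule.mem_map_of_mem (mem_degreeLE.2 (natDegree_le_iff_degree_le.1 hp))
  refine inner_eq_zero_of_isMinOn_norm_sub (hmem hq.1) ?_ (hmem hp)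
  rintro _ ⟨p', hp', rfl⟩
  have := hq.2 p' (natDegree_le_iff_degree_le.2 (mem_degreeLE.1 hp'))
  rw [wNormSq_polyMulSeq_sub_oneSeq hf, wNormSq_polyMulSeq_sub_oneSeq hf] at this
  exact le_of_sq_le_sq this (norm_nonneg _)

theorem IsOPA.polyMulℓ2_ne_zero (hq : IsOPA (fun _ => 1) f n q) (hf0 : f 0 ≠ 0) :
    polyMulℓ2 hf q ≠ 0 := by
  intro hzero
  have h := hq.inner_polyMulℓ2_eq_zero hf (p := 1) (by simp)
  rw [hzero, zero_sub, inner_neg_right, lp.inner_single_right, coe_polyMulℓ2, ← C_1,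
    polyMulSeq_C] at h
  exact hf0 (by simpa using h)

end polyMulℓ2

/-- In H², if f(0) ≠ 0 then every opa of 1/f has no zeros in the closed unit disk. -/
theorem stmt_9 (f : ℕ → ℂ) (hf : MemHw (fun _ => 1) f) (hf0 : f 0 ≠ 0)
    (n : ℕ) (q : Polynomial ℂ) (hq : IsOPA (fun _ => 1) f n q) :
    ∀ z : ℂ, ‖z‖ ≤ 1 → q.eval z ≠ 0 := by
  intro α hα hroot
  have hf2 := memHw_one_iff.1 hf
  set L := polyMulℓ2 hf2
  obtain ⟨r, rfl⟩ := dvd_iff_isRoot.2 hroot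
  have hdeg : (X * r).natDegree ≤ n := natDegree_X_mul_eq_natDegree_X_sub_C_mul α r ▸ hq.1
  have hsplit : L ((X - C α) * r) = L (X * r) - α • L r := by
    rw [sub_mul, map_sub, ← smul_eq_C_mul, map_smul]
  refine hq.polyMulℓ2_ne_zero hf2 hf0 ?_
  rw [hsplit, sub_eq_zero]
  refine eq_smul_of_norm_eq_of_inner_sub_smul_eq_zero hα (norm_polyMulℓ2_X_mul _ r) ?_
  rw [← hsplit, ← sub_add_cancel (L ((X - C α) * r)) (lp.single 2 0 1), inner_add_right,
    hq.inner_polyMulℓ2_eq_zero hf2 hdeg, inner_polyMulℓ2_X_mul_single_zero, add_zero]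
end
end
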